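/- Let D be the regular hexagon with vertices (1+√3,0), (1,1), (-1,1), (-1-√3,0), (-1,-1), (1,-1). For no choice of λ ∈ ℝ is the rule L_λ(f) = λ·(4+2√3)·f(0,0) + (1-λ)·((4+2√3)/6)·Σ f(vertices) exact simultaneously for f = x² and f = y², since ∫∫_D x² dA = 16/3+3√3 and ∫∫_D y² dA = 4/3+√3/3 but L_λ(x²)/L_λ(y²) is independent of λ (both are proportional to (1-λ)) with the wrong ratio. -/

import Mathlib

/-!
The hexagon is the region `|y| ≤ 1`, `|x| ≤ 1 + √3 - √3 |y|`, so by Fubini both second moments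
reduce to one-variable polynomial integrals, giving `16/3 + 3√3` and `4/3 + √3/3`. The rule vanishes
at the centre on both monomials, so its values are `(1 - λ)` times constants in the ratio `3 + √3`,
whereas the exact ratio is `(16 + 9√3)/(4 + √3)`; matching both would force `1 + 2√3 = 0`.
-/

open MeasureTheory Real

/-- The regular hexagon with vertices (1+√3,0), (1,1), (-1,1), (-1-√3,0),
(-1,-1), (1,-1). -/
noncomputable def Hex : Set (Fin 2 → ℝ) :=
  convexHull ℝ {![1 + Real.sqrt 3, 0], ![1, 1], ![-1, 1],
    ![-(1 + Real.sqrt 3), 0], ![-1, -1], ![1, -1]}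

/-- The weighted midpoint/vertex rule for the hexagon with parameter λ. -/
noncomputable def hexRule (l : ℝ) (f : (Fin 2 → ℝ) → ℝ) : ℝ :=
  l * (4 + 2 * Real.sqrt 3) * f ![0, 0]
    + (1 - l) * ((4 + 2 * Real.sqrt 3) / 6) *
      (f ![1 + Real.sqrt 3, 0] + f ![1, 1] + f ![-1, 1]
        + f ![-(1 + Real.sqrt 3), 0] + f ![-1, -1] + f ![1, -1])

open Set

section Integration

variable {E : Type*} [NormedAddCommGroup E] [NormedSpace ℝ E]

theorem intervalIntegral_comp_abs {g : ℝ → E} (hg : Continuous g) {a : ℝ} (ha : 0 ≤ a) :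
    ∫ y in -a..a, g |y| = (2 : ℝ) • ∫ y in 0..a, g y := by
  have hint : ∀ b c : ℝ, IntervalIntegrable (fun y => g |y|) volume b c := fun b c =>
    (hg.comp continuous_abs).intervalIntegrable b c
  have hright : ∫ y in 0..a, g |y| = ∫ y in 0..a, g y :=
    intervalIntegral.integral_congr fun y hy => by
      rw [uIcc_of_le ha] at hy
      rw [abs_of_nonneg hy.1]
  have hleft : ∫ y in -a..0, g |y| = ∫ y in 0..a, g |y| := by
    simpa using (intervalIntegral.integral_comp_neg (a := 0) (b := a) fun y => g |y|).symm
  rw [← intervalIntegral.integral_add_adjacent_intervals (hint _ 0) (hint 0 _), hleft, hright,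
    two_smul]

theorem setIntegral_eq_intervalIntegral_sections {S : Set (ℝ × ℝ)} (hS : MeasurableSet S)
    {f : ℝ × ℝ → E} (hf : IntegrableOn f S) {a b : ℝ} (hab : a ≤ b) {g h : ℝ → ℝ}
    (hgh : ∀ y ∈ Icc a b, g y ≤ h y)
    (hsec : ∀ x y, (x, y) ∈ S ↔ y ∈ Icc a b ∧ x ∈ Icc (g y) (h y)) :
    ∫ p in S, f p = ∫ y in a..b, ∫ x in g y..h y, f (x, y) := by
  have hint : Integrable (S.indicator f) (volume.prod volume) := by
    rw [← Measure.volume_eq_prod]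
    exact (integrable_indicator_iff hS).2 hf
  have hslice : ∀ y, ∫ x, S.indicator f (x, y) =
      (Icc a b).indicator (fun y => ∫ x in g y..h y, f (x, y)) y := by
    intro y
    by_cases hy : y ∈ Icc a b
    · have hsection : (fun x => S.indicator f (x, y)) =
          (Icc (g y) (h y)).indicator fun x => f (x, y) := by
        funext x
        by_cases hx : x ∈ Icc (g y) (h y)
        · rw [indicator_of_mem ((hsec x y).2 ⟨hy, hx⟩), indicator_of_mem hx]
        · rw [indicator_of_notMem (fun hxy => hx ((hsec x y).1 hxy).2), indicator_of_notMem hx]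
      rw [hsection, integral_indicator measurableSet_Icc, integral_Icc_eq_integral_Ioc,
        ← intervalIntegral.integral_of_le (hgh y hy), indicator_of_mem hy]
    · have hsection : (fun x => S.indicator f (x, y)) = fun _ => 0 := by
        funext x
        exact indicator_of_notMem (fun hxy => hy ((hsec x y).1 hxy).1) _
      rw [hsection, integral_zero, indicator_of_notMem hy]
  rw [← integral_indicator hS, Measure.volume_eq_prod, integral_prod_symm _ hint]
  simp only [hslice]
  rw [integral_indicator measurableSet_Icc, integral_Icc_eq_integral_Ioc,
    ← intervalIntegral.integral_of_le hab]

theorem setIntegral_finTwoArrow (S : Set (ℝ × ℝ)) (f : ℝ × ℝ → E) :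
    ∫ v in {v : Fin 2 → ℝ | (v 0, v 1) ∈ S}, f (v 0, v 1) = ∫ p in S, f p :=
  (volume_preserving_finTwoArrow ℝ).setIntegral_preimage_emb
    MeasurableEquiv.finTwoArrow.measurableEmbedding f S

end Integration

noncomputable def hexHalfWidth (y : ℝ) : ℝ := 1 + √3 - √3 * |y|

lemma one_le_hexHalfWidth {y : ℝ} (hy : |y| ≤ 1) : 1 ≤ hexHalfWidth y := by
  unfold hexHalfWidth
  nlinarith [sqrt_nonneg 3]

lemma hexHalfWidth_le (y : ℝ) : hexHalfWidth y ≤ 1 + √3 := by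
  unfold hexHalfWidth
  nlinarith [sqrt_nonneg 3, abs_nonneg y]

lemma convex_setOf_abs_le_hexHalfWidth :
    Convex ℝ {v : Fin 2 → ℝ | |v 1| ≤ 1 ∧ |v 0| ≤ hexHalfWidth (v 1)} := by
  have habs : ∀ i : Fin 2, ConvexOn ℝ univ fun v : Fin 2 → ℝ => |v i| := fun i =>
    (convexOn_norm convex_univ).comp_linearMap (LinearMap.proj (R := ℝ) (φ := fun _ : Fin 2 => ℝ) i)
  convert ((habs 1).convex_le 1).inter (((habs 0).add ((habs 1).smul (sqrt_nonneg 3))).convex_le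
    (1 + √3)) using 1
  ext v
  simp only [hexHalfWidth, mem_ofPred_eq, mem_inter_iff, mem_univ, true_and, Pi.add_apply,
    smul_eq_mul]
  constructor <;> rintro ⟨h1, h2⟩ <;> exact ⟨h1, by linarith⟩

lemma hex_subset_setOf_abs_le :
    Hex ⊆ {v : Fin 2 → ℝ | |v 1| ≤ 1 ∧ |v 0| ≤ hexHalfWidth (v 1)} := by
  refine convexHull_min ?_ convex_setOf_abs_le_hexHalfWidth
  have hs : 0 ≤ √3 := sqrt_nonneg 3
  simp only [insert_subset_iff, singleton_subset_iff, mem_ofPred_eq]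
  norm_num [hexHalfWidth, abs_le]
  linarith

lemma mem_hex_of_abs_le {x y : ℝ} (hy : |y| ≤ 1) (hx : |x| ≤ hexHalfWidth y) :
    ![x, y] ∈ Hex := by
  have hconv : Convex ℝ Hex := convex_convexHull ℝ _
  have hedge : ∀ {A B : Fin 2 → ℝ}, A ∈ Hex → B ∈ Hex →
      ∀ t ∈ Icc (0 : ℝ) 1, (1 - t) • A + t • B ∈ Hex := fun hA hB t ht =>
    hconv hA hB (sub_nonneg.2 ht.2) ht.1 (sub_add_cancel 1 t)
  set w := hexHalfWidth y with hw
  obtain ⟨hy1, hy2⟩ := abs_le.1 hy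
  -- `(±w, y)` lies on the boundary edge between the vertex `(±(1 + √3), 0)` and `(±1, sign y)`.
  have hends : ![w, y] ∈ Hex ∧ ![-w, y] ∈ Hex := by
    have hV := subset_convexHull ℝ ({![1 + √3, 0], ![1, 1], ![-1, 1], ![-(1 + √3), 0],
      ![-1, -1], ![1, -1]} : Set (Fin 2 → ℝ))
    rcases le_total 0 y with hy0 | hy0
    · constructor
      · convert hedge (hV (by simp) : ![1 + √3, 0] ∈ Hex) (hV (by simp) : ![1, 1] ∈ Hex) y
          ⟨hy0, hy2⟩ using 1
        ext i; fin_cases i <;> simp [hw, hexHalfWidth, abs_of_nonneg hy0]; ring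
      · convert hedge (hV (by simp) : ![-(1 + √3), 0] ∈ Hex) (hV (by simp) : ![-1, 1] ∈ Hex) y
          ⟨hy0, hy2⟩ using 1
        ext i; fin_cases i <;> simp [hw, hexHalfWidth, abs_of_nonneg hy0]; ring
    · constructor
      · convert hedge (hV (by simp) : ![1 + √3, 0] ∈ Hex) (hV (by simp) : ![1, -1] ∈ Hex) (-y)
          ⟨by linarith, by linarith⟩ using 1
        ext i; fin_cases i <;> simp [hw, hexHalfWidth, abs_of_nonpos hy0]; ring
      · convert hedge (hV (by simp) : ![-(1 + √3), 0] ∈ Hex) (hV (by simp) : ![-1, -1] ∈ Hex) (-y)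
          ⟨by linarith, by linarith⟩ using 1
        ext i; fin_cases i <;> simp [hw, hexHalfWidth, abs_of_nonpos hy0]; ring
  have hw0 : 0 < w := one_pos.trans_le (one_le_hexHalfWidth hy)
  obtain ⟨hxl, hxr⟩ := abs_le.1 hx
  convert hconv hends.1 hends.2 (div_nonneg (by linarith) (by positivity) : 0 ≤ (w + x) / (2 * w))
    (div_nonneg (by linarith) (by positivity) : 0 ≤ (w - x) / (2 * w)) (by field_simp; ring)
    using 1
  ext i; fin_cases i <;> simp <;> field_simp <;> ring

theorem hex_eq_setOf_abs_le :
    Hex = {v : Fin 2 → ℝ | |v 1| ≤ 1 ∧ |v 0| ≤ hexHalfWidth (v 1)} := by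
  refine hex_subset_setOf_abs_le.antisymm fun v hv => ?_
  have hv' : v = ![v 0, v 1] := by ext i; fin_cases i <;> rfl
  exact hv' ▸ mem_hex_of_abs_le hv.1 hv.2

theorem integral_hex {f : ℝ × ℝ → ℝ} (hf : Continuous f) :
    ∫ v in Hex, f (v 0, v 1) =
      ∫ y in -1..1, ∫ x in -hexHalfWidth y..hexHalfWidth y, f (x, y) := by
  have hw : Continuous hexHalfWidth := by unfold hexHalfWidth; fun_prop
  set S : Set (ℝ × ℝ) := {p | |p.2| ≤ 1 ∧ |p.1| ≤ hexHalfWidth p.2}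
  have hS : MeasurableSet S :=
    (measurableSet_le (f := fun p : ℝ × ℝ => |p.2|) (by fun_prop) measurable_const).inter
      (measurableSet_le (f := fun p : ℝ × ℝ => |p.1|) (by fun_prop)
        (hw.measurable.comp measurable_snd))
  have hbox : S ⊆ Icc (-(1 + √3)) (1 + √3) ×ˢ Icc (-1) 1 := fun p hp =>
    ⟨abs_le.1 (hp.2.trans (hexHalfWidth_le _)), abs_le.1 hp.1⟩
  have hint : IntegrableOn f S :=
    (hf.continuousOn.integrableOn_compact (isCompact_Icc.prod isCompact_Icc)).mono_set hbox
  rw [hex_eq_setOf_abs_le]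
  refine (setIntegral_finTwoArrow S f).trans (setIntegral_eq_intervalIntegral_sections hS hint
    (by norm_num) (fun y hy => ?_) fun x y => ?_)
  · have := one_le_hexHalfWidth (abs_le.2 hy)
    linarith
  · simp only [S, mem_ofPred_eq, mem_Icc, abs_le]

lemma integral_hex_sq_fst : ∫ v in Hex, (v 0) ^ 2 = 16 / 3 + 3 * √3 := by
  refine (integral_hex (f := fun p => p.1 ^ 2) (by fun_prop)).trans ?_
  have hs : √3 ^ 2 = 3 := sq_sqrt (by norm_num)
  calc ∫ y in -1..1, ∫ x in -hexHalfWidth y..hexHalfWidth y, (x, y).1 ^ 2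
      = ∫ y in -1..1, 2 / 3 * (1 + √3 - √3 * |y|) ^ 3 := by
        congr 1; funext y
        rw [integral_pow, hexHalfWidth]; ring
    _ = (2 : ℝ) • ∫ y in 0..1, 2 / 3 * (1 + √3 - √3 * y) ^ 3 :=
        intervalIntegral_comp_abs (g := fun t => 2 / 3 * (1 + √3 - √3 * t) ^ 3) (by fun_prop)
          zero_le_one
    _ = 16 / 3 + 3 * √3 := by
        rw [smul_eq_mul, intervalIntegral.integral_const_mul,
          intervalIntegral.integral_comp_sub_mul (fun t => t ^ 3) (by positivity), integral_pow,
          ← sqrt_div_self, smul_eq_mul]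
        linear_combination (√3 ^ 3 + 4 * √3 ^ 2 + 9 * √3 + 16) / 9 * hs

lemma integral_hex_sq_snd : ∫ v in Hex, (v 1) ^ 2 = 4 / 3 + √3 / 3 := by
  refine (integral_hex (f := fun p => p.2 ^ 2) (by fun_prop)).trans ?_
  have hpoly : (fun y : ℝ => 2 * y ^ 2 * (1 + √3 - √3 * y)) =
      fun y => 2 * (1 + √3) * y ^ 2 - 2 * √3 * y ^ 3 := by
    funext y; ring
  calc ∫ y in -1..1, ∫ x in -hexHalfWidth y..hexHalfWidth y, (x, y).2 ^ 2
      = ∫ y in -1..1, 2 * |y| ^ 2 * (1 + √3 - √3 * |y|) := by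
        congr 1; funext y
        simp only [intervalIntegral.integral_const, smul_eq_mul, hexHalfWidth, sq_abs]; ring
    _ = (2 : ℝ) • ∫ y in 0..1, 2 * y ^ 2 * (1 + √3 - √3 * y) :=
        intervalIntegral_comp_abs (g := fun t => 2 * t ^ 2 * (1 + √3 - √3 * t)) (by fun_prop)
          zero_le_one
    _ = 4 / 3 + √3 / 3 := by
        rw [hpoly, intervalIntegral.integral_sub, intervalIntegral.integral_const_mul,
          intervalIntegral.integral_const_mul, integral_pow, integral_pow, smul_eq_mul]
        · ring
        all_goals exact Continuous.intervalIntegrable (by fun_prop) _ _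

lemma hexRule_sq_fst (l : ℝ) :
    hexRule l (fun v => (v 0) ^ 2) = (1 - l) * (4 + 2 * √3) / 6 * (4 + 2 * (1 + √3) ^ 2) := by
  simp [hexRule]; ring

lemma hexRule_sq_snd (l : ℝ) :
    hexRule l (fun v => (v 1) ^ 2) = (1 - l) * (4 + 2 * √3) / 6 * 4 := by
  simp [hexRule]; ring

theorem stmt_15 :
    (∫ v in Hex, (v 0)^2) = 16/3 + 3 * Real.sqrt 3 ∧
    (∫ v in Hex, (v 1)^2) = 4/3 + Real.sqrt 3 / 3 ∧
    ¬ ∃ l : ℝ,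
      hexRule l (fun v => (v 0)^2) = ∫ v in Hex, (v 0)^2 ∧
      hexRule l (fun v => (v 1)^2) = ∫ v in Hex, (v 1)^2 := by
  refine ⟨integral_hex_sq_fst, integral_hex_sq_snd, ?_⟩
  rintro ⟨l, hx, hy⟩
  rw [hexRule_sq_fst, integral_hex_sq_fst] at hx
  rw [hexRule_sq_snd, integral_hex_sq_snd] at hy
  have hs : √3 ^ 2 = 3 := sq_sqrt (by norm_num)
  have hcontra : 1 + 2 * √3 = 0 := by
    linear_combination -3 * hx + 3 * (3 + √3) * hy + (1 + (1 - l) * (4 + 2 * √3)) * hs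
  exact absurd hcontra (by positivity)
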